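/- Let P be a poset with least element 0 and Z(P)^× ≠ ∅. If the zero-divisor graph Γ(P) is r-regular for some natural number r (i.e., every vertex of Γ(P) has degree exactly r), then the reduced zero-divisor graph Γ_E(P) is a complete graph. -/

import Mathlib

/-!
If `0 < z ≤ x`, every neighbour of `x` in `Γ(P)` is a neighbour of `z`. When `Γ(P)` is
`r`-regular both neighbourhoods are finite of size `r`, so they coincide. Two classes `[x] ≠ [y]`
that are not adjacent in `Γ_E(P)` would have a common lower bound `z ≠ 0`; then `x` and `y` both
have the neighbourhood of `z`, hence the same annihilator, so `[x] = [y]`.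
-/

/-- `L(x,y) = {z : z ≤ x ∧ z ≤ y}`, where the least element `0` of the poset is `⊥`. -/
def LSet (P : Type*) [PartialOrder P] [OrderBot P] (x y : P) : Set P := {z | z ≤ x ∧ z ≤ y}

theorem LSet_comm (P : Type*) [PartialOrder P] [OrderBot P] (x y : P) :
    LSet P x y = LSet P y x := by
  ext z; exact ⟨fun h => ⟨h.2, h.1⟩, fun h => ⟨h.2, h.1⟩⟩

/-- The annihilator of `x`: `ann(x) = {y : L(x,y) = {0}}`. -/
def ann (P : Type*) [PartialOrder P] [OrderBot P] (x : P) : Set P := {y | LSet P x y = {⊥}}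

theorem mem_ann_comm (P : Type*) [PartialOrder P] [OrderBot P] (x y : P) :
    y ∈ ann P x ↔ x ∈ ann P y := by
  simp only [ann, Set.mem_setOf_eq, LSet_comm P x y]

/-- The set `Z(P)^× = Z(P) \ {0}` of nonzero zero-divisors of `P`. -/
def ZDivX (P : Type*) [PartialOrder P] [OrderBot P] : Set P :=
  {x | x ≠ ⊥ ∧ ∃ y : P, y ≠ ⊥ ∧ LSet P x y = {⊥}}

/-- The zero-divisor graph `Γ(P)` on `Z(P)^×`. -/
def zdGraph (P : Type*) [PartialOrder P] [OrderBot P] : SimpleGraph (ZDivX P) where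
  Adj a b := (a : P) ≠ (b : P) ∧ LSet P a b = {⊥}
  symm := by
    constructor
    rintro a b ⟨h1, h2⟩
    exact ⟨fun h => h1 h.symm, by rw [LSet_comm]; exact h2⟩
  loopless := by constructor; rintro a ⟨h1, _⟩; exact h1 rfl

/-- The equivalence `x ∼ y ↔ ann(x) = ann(y)` on `Z(P)^×`. -/
def annSetoid (P : Type*) [PartialOrder P] [OrderBot P] : Setoid (ZDivX P) where
  r a b := ann P a = ann P b
  iseqv := ⟨fun _ => rfl, Eq.symm, Eq.trans⟩

/-- The reduced zero-divisor graph `Γ_E(P)`, on equivalence classes of `Z(P)^×`. -/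
def redGraph (P : Type*) [PartialOrder P] [OrderBot P] :
    SimpleGraph (Quotient (annSetoid P)) where
  Adj := Quotient.lift₂ (fun a b => LSet P (a : P) (b : P) = {⊥}) (by
    intro a b a' b' ha hb
    have ha' : ann P (a : P) = ann P (a' : P) := ha
    have hb' : ann P (b : P) = ann P (b' : P) := hb
    apply propext
    constructor
    · intro h
      have h1 : (b : P) ∈ ann P (a : P) := h
      rw [ha', mem_ann_comm, hb', mem_ann_comm] at h1
      exact h1
    · intro h
      have h1 : (b' : P) ∈ ann P (a' : P) := h
      rw [← ha', mem_ann_comm, ← hb', mem_ann_comm] at h1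
      exact h1)
  symm := by
    constructor
    intro x y
    refine Quotient.inductionOn₂ x y ?_
    intro a b h
    have h' : LSet P (a : P) (b : P) = {⊥} := h
    show LSet P (b : P) (a : P) = {⊥}
    rw [LSet_comm]; exact h'
  loopless := by
    constructor
    intro x
    refine Quotient.inductionOn x ?_
    intro a h
    have h' : LSet P (a : P) (a : P) = {⊥} := h
    have hm : (a : P) ∈ LSet P (a : P) (a : P) := ⟨le_refl _, le_refl _⟩
    rw [h'] at hm
    exact a.2.1 hm

section ZeroDivisorGraph

variable {P : Type*} [PartialOrder P] [OrderBot P]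

lemma LSet_eq_singleton_bot_iff {x y : P} :
    LSet P x y = {⊥} ↔ ∀ z, z ≤ x → z ≤ y → z = ⊥ := by
  constructor
  · intro h z hzx hzy
    have hz : z ∈ LSet P x y := ⟨hzx, hzy⟩
    rwa [h] at hz
  · intro h
    ext z
    simp only [LSet, Set.mem_ofPred_eq, Set.mem_singleton_iff]
    exact ⟨fun hz => h z hz.1 hz.2, fun hz => hz ▸ ⟨bot_le, bot_le⟩⟩

lemma ann_subset_ann_of_le {x z : P} (h : z ≤ x) : ann P x ⊆ ann P z := by
  intro w hw
  simp only [ann, Set.mem_ofPred_eq, LSet_eq_singleton_bot_iff] at hw ⊢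
  exact fun u hu hw' => hw u (hu.trans h) hw'

lemma bot_mem_ann (x : P) : ⊥ ∈ ann P x :=
  LSet_eq_singleton_bot_iff.mpr fun _ _ h => le_bot_iff.mp h

lemma ne_of_mem_ann {x w : P} (hx : x ≠ ⊥) (hw : w ∈ ann P x) : x ≠ w := by
  rintro rfl
  exact hx (LSet_eq_singleton_bot_iff.mp hw x le_rfl le_rfl)

lemma mem_ZDivX_of_le {x z : P} (hx : x ∈ ZDivX P) (hz : z ≠ ⊥) (hzx : z ≤ x) :
    z ∈ ZDivX P := by
  obtain ⟨-, w, hw, hxw⟩ := hx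
  exact ⟨hz, w, hw, ann_subset_ann_of_le hzx hxw⟩

lemma zdGraph_adj_iff {v w : ZDivX P} : (zdGraph P).Adj v w ↔ (w : P) ∈ ann P v :=
  ⟨And.right, fun h => ⟨ne_of_mem_ann v.2.1 h, h⟩⟩

lemma ann_subset_ann_of_neighborSet_subset {x y : ZDivX P}
    (h : (zdGraph P).neighborSet x ⊆ (zdGraph P).neighborSet y) :
    ann P x ⊆ ann P y := by
  intro w hw
  by_cases hw₀ : w = ⊥
  · exact hw₀ ▸ bot_mem_ann _
  · have hwZ : w ∈ ZDivX P := ⟨hw₀, x, x.2.1, (mem_ann_comm P x w).mp hw⟩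
    exact zdGraph_adj_iff.mp (h (zdGraph_adj_iff.mpr hw : (zdGraph P).Adj x ⟨w, hwZ⟩))

lemma ann_eq_ann_of_neighborSet_eq {x y : ZDivX P}
    (h : (zdGraph P).neighborSet x = (zdGraph P).neighborSet y) : ann P x = ann P y :=
  (ann_subset_ann_of_neighborSet_subset h.subset).antisymm
    (ann_subset_ann_of_neighborSet_subset h.symm.subset)

lemma zdGraph_neighborSet_subset_of_le {v z : ZDivX P} (hzv : (z : P) ≤ v) :
    (zdGraph P).neighborSet v ⊆ (zdGraph P).neighborSet z := fun _ hw =>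
  zdGraph_adj_iff.mpr (ann_subset_ann_of_le hzv (zdGraph_adj_iff.mp hw))

lemma zdGraph_neighborSet_eq_of_le {r : ℕ}
    (hreg : ∀ v : ZDivX P, ((zdGraph P).neighborSet v).encard = r) {v z : ZDivX P}
    (hzv : (z : P) ≤ v) : (zdGraph P).neighborSet v = (zdGraph P).neighborSet z :=
  (Set.finite_of_encard_eq_coe (hreg z)).eq_of_subset_of_encard_le'
    (zdGraph_neighborSet_subset_of_le hzv) (by rw [hreg z, hreg v])

lemma ann_eq_ann_of_common_lower_bound {r : ℕ}
    (hreg : ∀ v : ZDivX P, ((zdGraph P).neighborSet v).encard = r) {x y : ZDivX P} {z : P}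
    (hz : z ≠ ⊥) (hzx : z ≤ x) (hzy : z ≤ y) : ann P x = ann P y := by
  let z' : ZDivX P := ⟨z, mem_ZDivX_of_le x.2 hz hzx⟩
  apply ann_eq_ann_of_neighborSet_eq
  rw [zdGraph_neighborSet_eq_of_le hreg (z := z') hzx,
    zdGraph_neighborSet_eq_of_le hreg (z := z') hzy]

end ZeroDivisorGraph

theorem stmt19_general (P : Type*) [PartialOrder P] [OrderBot P]
    (r : ℕ) (hreg : ∀ v : ZDivX P, ((zdGraph P).neighborSet v).encard = r) :
    redGraph P = ⊤ := by
  ext a b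
  induction a, b using Quotient.inductionOn₂ with
  | h x y =>
    refine ⟨SimpleGraph.Adj.ne, fun hne => ?_⟩
    show LSet P x y = {⊥}
    refine LSet_eq_singleton_bot_iff.mpr fun z hzx hzy => ?_
    by_contra hz
    exact hne (Quotient.sound (ann_eq_ann_of_common_lower_bound hreg hz hzx hzy))

/-- If `Γ(P)` is an `r`-regular graph, then `Γ_E(P)` is a complete graph. -/
theorem stmt19 (P : Type*) [PartialOrder P] [OrderBot P] (hZ : (ZDivX P).Nonempty)
    (r : ℕ) (hreg : ∀ v : ZDivX P, ((zdGraph P).neighborSet v).encard = r) :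
    redGraph P = ⊤ :=
  stmt19_general P r hreg
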